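/- arXiv:1805.08037 — 2 statements merged into one kernel-verified Lean document; each statement's English description precedes it below -/
import Mathlib

section
/- For all sets A, B, C of solution mappings, best-match(A ⟕ (B ∪ C)) = best-match((A ⟕ B) ∪ (A ⟕ C)); that is, under minimum union (union followed by removal of subsumed results), the rewrite of P₁ ⟕ (P₂ ∪ P₃) as (P₁ ⟕ P₂) ∪ (P₁ ⟕ P₃) produces exactly the same non-subsumed results as the original pattern. -/
/-- Two solution mappings are compatible if they agree wherever both are bound. -/
def Compatible {V D : Type*} (μ₁ μ₂ : V → Option D) : Prop :=
  ∀ v, μ₁ v = none ∨ μ₂ v = none ∨ μ₁ v = μ₂ v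

/-- Merge of two solution mappings: the left binding takes precedence. -/
def mergeMap {V D : Type*} (μ₁ μ₂ : V → Option D) : V → Option D :=
  fun v => (μ₁ v).orElse (fun _ => μ₂ v)

/-- SPARQL inner join of two sets of solution mappings. -/
def joinSet {V D : Type*} (A B : Set (V → Option D)) : Set (V → Option D) :=
  {μ | ∃ μ₁ ∈ A, ∃ μ₂ ∈ B, Compatible μ₁ μ₂ ∧ μ = mergeMap μ₁ μ₂}

/-- SPARQL difference: mappings in A with no compatible partner in B. -/
def diffSet {V D : Type*} (A B : Set (V → Option D)) : Set (V → Option D) :=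
  {μ₁ ∈ A | ∀ μ₂ ∈ B, ¬ Compatible μ₁ μ₂}

/-- SPARQL left outer join (OPTIONAL). -/
def leftJoinSet {V D : Type*} (A B : Set (V → Option D)) : Set (V → Option D) :=
  joinSet A B ∪ diffSet A B

/-- Semi-join: mappings in A having some compatible partner in B. -/
def semiJoin {V D : Type*} (A B : Set (V → Option D)) : Set (V → Option D) :=
  {μ₁ ∈ A | ∃ μ₂ ∈ B, Compatible μ₁ μ₂}

/-- Subsumption order: μ₂ binds everything μ₁ binds, to the same value. -/
def Subsumes {V D : Type*} (μ₁ μ₂ : V → Option D) : Prop :=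
  ∀ v, μ₁ v ≠ none → μ₂ v = μ₁ v

/-- best-match: the subsumption-maximal elements of X. -/
def bestMatch {V D : Type*} (X : Set (V → Option D)) : Set (V → Option D) :=
  {μ ∈ X | ∀ μ' ∈ X, Subsumes μ μ' → μ' = μ}

/-!
Every mapping in `A ⟕ B` or `A ⟕ C` is subsumed by one in `A ⟕ (B ∪ C)`: a join result is
already there, and a mapping of `A` without partner in `B` either stays without partner in
`B ∪ C` or extends, through a partner in `C`, to a join result. Conversely `A ⟕ (B ∪ C)` is
contained in the union. A subset that dominates a set has the same maximal elements.
-/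

namespace Subsumes

variable {V D : Type*}

theorem refl (μ : V → Option D) : Subsumes μ μ := fun _ _ => rfl

theorem trans {μ₁ μ₂ μ₃ : V → Option D} (h₁ : Subsumes μ₁ μ₂) (h₂ : Subsumes μ₂ μ₃) :
    Subsumes μ₁ μ₃ := fun v hv => by
  rw [h₂ v (by rwa [h₁ v hv]), h₁ v hv]

theorem antisymm {μ₁ μ₂ : V → Option D} (h₁ : Subsumes μ₁ μ₂) (h₂ : Subsumes μ₂ μ₁) :
    μ₁ = μ₂ := by
  funext v
  by_cases hv₁ : μ₁ v = none
  · by_cases hv₂ : μ₂ v = none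
    · rw [hv₁, hv₂]
    · exact h₂ v hv₂
  · exact (h₁ v hv₁).symm

end Subsumes

section SolutionMappings

variable {V D : Type*}

theorem subsumes_mergeMap (μ₁ μ₂ : V → Option D) : Subsumes μ₁ (mergeMap μ₁ μ₂) := by
  intro v hv
  obtain ⟨a, ha⟩ := Option.ne_none_iff_exists'.mp hv
  simp [mergeMap, ha]

theorem bestMatch_eq_of_subset_of_forall_exists_subsumes {X Y : Set (V → Option D)}
    (hXY : X ⊆ Y) (hdom : ∀ μ ∈ Y, ∃ μ' ∈ X, Subsumes μ μ') :
    bestMatch X = bestMatch Y := by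
  ext μ
  constructor
  · rintro ⟨hμX, hmax⟩
    refine ⟨hXY hμX, fun ν hνY hμν => ?_⟩
    obtain ⟨ν', hν'X, hνν'⟩ := hdom ν hνY
    obtain rfl : ν' = μ := hmax ν' hν'X (hμν.trans hνν')
    exact hνν'.antisymm hμν
  · rintro ⟨hμY, hmax⟩
    obtain ⟨μ', hμ'X, hμμ'⟩ := hdom μ hμY
    obtain rfl : μ' = μ := hmax μ' (hXY hμ'X) hμμ'
    exact ⟨hμ'X, fun ν hνX => hmax ν (hXY hνX)⟩

theorem joinSet_mono_right {A B B' : Set (V → Option D)} (h : B ⊆ B') :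
    joinSet A B ⊆ joinSet A B' := by
  rintro μ ⟨μ₁, hμ₁, μ₂, hμ₂, hc, rfl⟩
  exact ⟨μ₁, hμ₁, μ₂, h hμ₂, hc, rfl⟩

theorem diffSet_anti_right {A B B' : Set (V → Option D)} (h : B ⊆ B') :
    diffSet A B' ⊆ diffSet A B :=
  fun _ ⟨hA, hd⟩ => ⟨hA, fun μ₂ hμ₂ => hd μ₂ (h hμ₂)⟩

theorem joinSet_union_right (A B C : Set (V → Option D)) :
    joinSet A (B ∪ C) = joinSet A B ∪ joinSet A C := by
  ext μ
  constructor
  · rintro ⟨μ₁, hμ₁, μ₂, hμ₂ | hμ₂, hc, rfl⟩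
    · exact Or.inl ⟨μ₁, hμ₁, μ₂, hμ₂, hc, rfl⟩
    · exact Or.inr ⟨μ₁, hμ₁, μ₂, hμ₂, hc, rfl⟩
  · rintro (hB | hC)
    · exact joinSet_mono_right Set.subset_union_left hB
    · exact joinSet_mono_right Set.subset_union_right hC

theorem leftJoinSet_union_right_subset (A B C : Set (V → Option D)) :
    leftJoinSet A (B ∪ C) ⊆ leftJoinSet A B ∪ leftJoinSet A C := by
  rintro μ (hjoin | hdiff)
  · rcases (joinSet_union_right A B C).subset hjoin with hB | hC
    · exact Or.inl (Or.inl hB)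
    · exact Or.inr (Or.inl hC)
  · exact Or.inl (Or.inr (diffSet_anti_right Set.subset_union_left hdiff))

theorem exists_subsumes_mem_leftJoinSet_of_subset {A B B' : Set (V → Option D)} (h : B ⊆ B')
    {μ : V → Option D} (hμ : μ ∈ leftJoinSet A B) :
    ∃ μ' ∈ leftJoinSet A B', Subsumes μ μ' := by
  rcases hμ with hjoin | ⟨hA, -⟩
  · exact ⟨μ, Or.inl (joinSet_mono_right h hjoin), Subsumes.refl μ⟩
  · by_cases hpartner : ∃ μ₂ ∈ B', Compatible μ μ₂
    · obtain ⟨μ₂, hμ₂, hc⟩ := hpartner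
      exact ⟨mergeMap μ μ₂, Or.inl ⟨μ, hA, μ₂, hμ₂, hc, rfl⟩, subsumes_mergeMap μ μ₂⟩
    · push Not at hpartner
      exact ⟨μ, Or.inr ⟨hA, hpartner⟩, Subsumes.refl μ⟩

end SolutionMappings

theorem bestMatch_unf_rewrite (V D : Type*) (A B C : Set (V → Option D)) :
    bestMatch (leftJoinSet A (B ∪ C)) = bestMatch (leftJoinSet A B ∪ leftJoinSet A C) := by
  refine bestMatch_eq_of_subset_of_forall_exists_subsumes
    (leftJoinSet_union_right_subset A B C) ?_
  rintro μ (hB | hC)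
  · exact exists_subsumes_mem_leftJoinSet_of_subset Set.subset_union_left hB
  · exact exists_subsumes_mem_leftJoinSet_of_subset Set.subset_union_right hC
end

section
/- Let A and B be sets of solution mappings and set A' = A ⋉ B and B' = B ⋉ A. Then A' ⋈ B' = A ⋈ B, and every μ ∈ A' ∪ B' satisfies μ ⊑ ρ for some ρ ∈ A ⋈ B; that is, one round of mutual semi-joins preserves the join results and leaves both operands minimal: every remaining mapping participates in some final join result. -/
theorem Compatible.symm {V D : Type*} {μ₁ μ₂ : V → Option D} (h : Compatible μ₁ μ₂) :
    Compatible μ₂ μ₁ := fun v => by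
  rcases h v with h | h | h
  exacts [Or.inr (Or.inl h), Or.inl h, Or.inr (Or.inr h.symm)]

theorem subsumes_mergeMap_left {V D : Type*} (μ₁ μ₂ : V → Option D) :
    Subsumes μ₁ (mergeMap μ₁ μ₂) := fun v hv => by
  obtain ⟨a, ha⟩ := Option.ne_none_iff_exists'.mp hv
  simp [mergeMap, ha]

theorem Compatible.subsumes_mergeMap_right {V D : Type*} {μ₁ μ₂ : V → Option D}
    (h : Compatible μ₁ μ₂) : Subsumes μ₂ (mergeMap μ₁ μ₂) := fun v hv => by
  rcases h v with h₁ | h₂ | heq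
  · simp [mergeMap, h₁]
  · exact absurd h₂ hv
  · rw [← heq]
    exact subsumes_mergeMap_left μ₁ μ₂ v (heq ▸ hv)

theorem semiJoin_subset {V D : Type*} (A B : Set (V → Option D)) : semiJoin A B ⊆ A :=
  fun _ h => h.1

theorem joinSet_mono {V D : Type*} {A₁ A₂ B₁ B₂ : Set (V → Option D)} (hA : A₁ ⊆ A₂)
    (hB : B₁ ⊆ B₂) : joinSet A₁ B₁ ⊆ joinSet A₂ B₂ := by
  rintro _ ⟨μ₁, h₁, μ₂, h₂, hc, rfl⟩
  exact ⟨μ₁, hA h₁, μ₂, hB h₂, hc, rfl⟩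

theorem joinSet_semiJoin_semiJoin {V D : Type*} (A B : Set (V → Option D)) :
    joinSet (semiJoin A B) (semiJoin B A) = joinSet A B := by
  refine (joinSet_mono (semiJoin_subset A B) (semiJoin_subset B A)).antisymm ?_
  rintro _ ⟨μ₁, h₁, μ₂, h₂, hc, rfl⟩
  exact ⟨μ₁, ⟨h₁, μ₂, h₂, hc⟩, μ₂, ⟨h₂, μ₁, h₁, hc.symm⟩, hc, rfl⟩

theorem exists_mem_joinSet_subsumes_of_mem_semiJoin_left {V D : Type*}
    {A B : Set (V → Option D)} {μ : V → Option D} (h : μ ∈ semiJoin A B) :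
    ∃ ρ ∈ joinSet A B, Subsumes μ ρ := by
  obtain ⟨hμ, ν, hν, hc⟩ := h
  exact ⟨mergeMap μ ν, ⟨μ, hμ, ν, hν, hc, rfl⟩, subsumes_mergeMap_left μ ν⟩

theorem exists_mem_joinSet_subsumes_of_mem_semiJoin_right {V D : Type*}
    {A B : Set (V → Option D)} {μ : V → Option D} (h : μ ∈ semiJoin B A) :
    ∃ ρ ∈ joinSet A B, Subsumes μ ρ := by
  obtain ⟨hμ, ν, hν, hc⟩ := h
  exact ⟨mergeMap ν μ, ⟨ν, hν, μ, hμ, hc.symm, rfl⟩, hc.symm.subsumes_mergeMap_right⟩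

theorem mutual_semijoin_minimal (V D : Type*) (A B : Set (V → Option D))
    (A' B' : Set (V → Option D)) (hA : A' = semiJoin A B) (hB : B' = semiJoin B A) :
    joinSet A' B' = joinSet A B ∧
    ∀ μ ∈ A' ∪ B', ∃ ρ ∈ joinSet A B, Subsumes μ ρ := by
  subst hA hB
  refine ⟨joinSet_semiJoin_semiJoin A B, ?_⟩
  rintro μ (hμ | hμ)
  · exact exists_mem_joinSet_subsumes_of_mem_semiJoin_left hμ
  · exact exists_mem_joinSet_subsumes_of_mem_semiJoin_right hμ
end
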